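/- arXiv:1710.00582 — 6 statements merged into one kernel-verified Lean document; each statement's English description precedes it below -/
import Mathlib

section
/- Let G be a finite soluble group. Then the largest size m(G) of an irredundant (independent) generating set of G equals the number of complemented factors in a chief series of G. -/
open Subgroup
open scoped Classical

/-- A set `s` is an irredundant generating set of the group `G`: it generates `G`
but no proper subset does. -/
def IrredSet {G : Type*} [Group G] (s : Set G) : Prop :=
  Subgroup.closure s = ⊤ ∧ ∀ x ∈ s, Subgroup.closure (s \ {x}) ≠ ⊤

/-- `mIrr G` is the largest size of an irredundant generating set of `G`. -/
noncomputable def mIrr (G : Type*) [Group G] : ℕ :=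
  sSup {n | ∃ s : Set G, s.Finite ∧ s.ncard = n ∧ IrredSet s}

/-- `dGen G` is the smallest size of a generating set of `G`. -/
noncomputable def dGen (G : Type*) [Group G] : ℕ :=
  sInf {n | ∃ s : Set G, s.Finite ∧ s.ncard = n ∧ Subgroup.closure s = ⊤}

/-- A sequence `g : Fin n → G` is an irredundant generating sequence:
it generates `G` but no proper subsequence does. -/
def IrredSeq {G : Type*} [Group G] {n : ℕ} (g : Fin n → G) : Prop :=
  Subgroup.closure (Set.range g) = ⊤ ∧
  ∀ i : Fin n, Subgroup.closure (g '' {i}ᶜ) ≠ ⊤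

/-- `G` satisfies the replacement property: for every irredundant generating
sequence of maximal length `mIrr G` and every nontrivial `x : G`, some entry
can be replaced by `x` so that the sequence still generates. -/
def ReplacementProperty (G : Type*) [Group G] : Prop :=
  ∀ g : Fin (mIrr G) → G, IrredSeq g → ∀ x : G, x ≠ 1 →
    ∃ i, Subgroup.closure (Set.range (Function.update g i x)) = ⊤

/-- The strong replacement property: replacement holds for irredundant
generating sequences of any length. -/
def StrongReplacementProperty (G : Type*) [Group G] : Prop :=
  ∀ (n : ℕ) (g : Fin n → G), IrredSeq g → ∀ x : G, x ≠ 1 →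
    ∃ i, Subgroup.closure (Set.range (Function.update g i x)) = ⊤

/-- `G` is a K-group: its subgroup lattice is complemented. -/
def IsKGroup (G : Type*) [Group G] : Prop :=
  ∀ H : Subgroup G, ∃ X : Subgroup G, H ⊔ X = ⊤ ∧ H ⊓ X = ⊥

/-- `μ` is the Möbius function of the subgroup lattice of `G`. -/
def IsMobius {G : Type*} [Group G] (μ : Subgroup G → ℤ) : Prop :=
  ∀ H : Subgroup G, ∑ᶠ K ∈ {K : Subgroup G | H ≤ K}, μ K = if H = ⊤ then 1 else 0

/-- `B/A` is a chief factor of `G`. -/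
def ChiefFactor {G : Type*} [Group G] (A B : Subgroup G) : Prop :=
  A.Normal ∧ B.Normal ∧ A < B ∧
    ∀ N : Subgroup G, N.Normal → A ≤ N → N ≤ B → N = A ∨ N = B

/-- The factor `B/A` is complemented in `G/A`: there is a subgroup `K ≥ A`
with `K ⊔ B = G` and `K ⊓ B = A`. -/
def ComplementedFactor {G : Type*} [Group G] (A B : Subgroup G) : Prop :=
  ∃ K : Subgroup G, A ≤ K ∧ K ⊔ B = ⊤ ∧ K ⊓ B = A

/-- `c` is a chief series of `G`. -/
def IsChiefSeries {G : Type*} [Group G] {n : ℕ} (c : Fin (n + 1) → Subgroup G) : Prop :=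
  c 0 = ⊥ ∧ c (Fin.last n) = ⊤ ∧ ∀ i : Fin n, ChiefFactor (c i.castSucc) (c i.succ)

/-- `N` is a minimal normal subgroup of `G`. -/
def IsMinimalNormal {G : Type*} [Group G] (N : Subgroup G) : Prop :=
  N.Normal ∧ N ≠ ⊥ ∧ ∀ K : Subgroup G, K.Normal → K ≤ N → K = ⊥ ∨ K = N

/-- `F` is the Fitting subgroup of `G`: the largest nilpotent normal subgroup. -/
def IsFitting {G : Type*} [Group G] (F : Subgroup G) : Prop :=
  F.Normal ∧ Group.IsNilpotent F ∧
    ∀ K : Subgroup G, K.Normal → Group.IsNilpotent K → K ≤ F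

/-!
Induction along the chief series. Its first term `N` is a minimal normal subgroup, abelian
because `G` is soluble, and then every supplement of `N` in `G` is either maximal or `G` itself.
Hence an irredundant generating set of `G` becomes irredundant modulo `N` after discarding at
most one element; if `N` has no complement it lies in the Frattini subgroup and nothing is
discarded. Conversely an irredundant generating set of `G ⧸ N` lifts to `G`, into a complement
`K` of `N` when there is one, and then a nontrivial element of `N` can be added to it.
So `m(G)` is `m(G ⧸ N) + 1` or `m(G ⧸ N)` according as `N` is complemented or not.
-/

section

open QuotientGroup

variable {G : Type*} [Group G]

section mIrr

lemma IrredSet.of_minimal {s : Set G} (hs : Minimal (fun t : Set G => closure t = ⊤) s) :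
    IrredSet s :=
  ⟨hs.prop, fun _ hx htop => (hs.le_of_le htop Set.sdiff_subset hx).2 rfl⟩

lemma exists_irredSet [Finite G] : ∃ s : Set G, IrredSet s := by
  obtain ⟨s, hs⟩ := exists_minimal_of_wellFoundedLT (fun t : Set G => closure t = ⊤)
    ⟨Set.univ, closure_univ⟩
  exact ⟨s, IrredSet.of_minimal hs⟩

lemma bddAbove_ncard_irredSet [Finite G] :
    BddAbove {n | ∃ s : Set G, s.Finite ∧ s.ncard = n ∧ IrredSet s} :=
  ⟨Nat.card G, fun _ ⟨s, _, hs, _⟩ => hs ▸ Set.ncard_le_card s⟩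

lemma IrredSet.ncard_le_mIrr [Finite G] {s : Set G} (hs : IrredSet s) : s.ncard ≤ mIrr G :=
  le_csSup bddAbove_ncard_irredSet ⟨s, s.toFinite, rfl, hs⟩

lemma exists_irredSet_ncard_eq_mIrr [Finite G] :
    ∃ s : Set G, IrredSet s ∧ s.ncard = mIrr G := by
  obtain ⟨s, hs⟩ := exists_irredSet (G := G)
  obtain ⟨t, -, ht, hti⟩ :=
    Nat.sSup_mem (s := {n | ∃ s : Set G, s.Finite ∧ s.ncard = n ∧ IrredSet s})
      ⟨_, s, s.toFinite, rfl, hs⟩ bddAbove_ncard_irredSet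
  exact ⟨t, hti, ht⟩

lemma mIrr_eq_zero [Subsingleton G] : mIrr G = 0 := by
  obtain ⟨s, hs, hcard⟩ := exists_irredSet_ncard_eq_mIrr (G := G)
  have : s = ∅ := Set.eq_empty_of_forall_notMem fun x hx =>
    hs.2 x hx (Subsingleton.elim (α := Subgroup G) _ _)
  rw [← hcard, this, Set.ncard_empty]

end mIrr

section Modulo

variable (N : Subgroup G) [N.Normal]

def IrredModulo (s : Set G) : Prop :=
  closure s ⊔ N = ⊤ ∧ ∀ x ∈ s, closure (s \ {x}) ⊔ N ≠ ⊤

variable {N}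

lemma map_mk'_eq_top_iff {H : Subgroup G} : H.map (mk' N) = ⊤ ↔ H ⊔ N = ⊤ := by
  rw [← (comap_injective (mk'_surjective N)).eq_iff, comap_map_eq, ker_mk', comap_top]

lemma closure_image_mk'_eq_top_iff {s : Set G} :
    closure (mk' N '' s) = ⊤ ↔ closure s ⊔ N = ⊤ := by
  rw [← MonoidHom.map_closure, map_mk'_eq_top_iff]

lemma IrredModulo.injOn {s : Set G} (hs : IrredModulo N s) : Set.InjOn (mk' N) s := by
  intro a ha b hb hab
  by_contra hne
  refine hs.2 a ha (top_unique (hs.1 ▸ sup_le ((closure_le _).2 fun z hz => ?_) le_sup_right))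
  obtain rfl | hza := eq_or_ne z a
  · have hbz : b⁻¹ * z ∈ N := QuotientGroup.eq.mp hab.symm
    have hb : b ∈ closure (s \ {z}) := subset_closure ⟨hb, Ne.symm hne⟩
    simpa using mul_mem_sup hb hbz
  · exact mem_sup_left (subset_closure ⟨hz, hza⟩)

lemma IrredModulo.irredSet_image {s : Set G} (hs : IrredModulo N s) : IrredSet (mk' N '' s) := by
  refine ⟨closure_image_mk'_eq_top_iff.2 hs.1, ?_⟩
  rintro _ ⟨y, hy, rfl⟩ htop
  refine hs.2 y hy (closure_image_mk'_eq_top_iff.1 (top_unique (htop ▸ closure_mono ?_)))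
  rintro _ ⟨⟨z, hz, rfl⟩, hzy⟩
  exact ⟨z, ⟨hz, fun h => hzy (congrArg _ h)⟩, rfl⟩

lemma IrredModulo.ncard_le_mIrr [Finite G] {s : Set G} (hs : IrredModulo N s) :
    s.ncard ≤ mIrr (G ⧸ N) :=
  hs.injOn.ncard_image ▸ hs.irredSet_image.ncard_le_mIrr

lemma irredModulo_image_of_leftInverse {σ : G ⧸ N → G} (hσ : Function.LeftInverse (mk' N) σ)
    {t : Set (G ⧸ N)} (ht : IrredSet t) : IrredModulo N (σ '' t) := by
  refine ⟨closure_image_mk'_eq_top_iff.1 (by rw [hσ.image_image]; exact ht.1), ?_⟩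
  rintro _ ⟨y, hy, rfl⟩ htop
  rw [← Set.image_singleton, ← Set.image_sdiff hσ.injective, ← closure_image_mk'_eq_top_iff,
    hσ.image_image] at htop
  exact ht.2 y hy htop

lemma exists_irredModulo_subset_ncard_eq_mIrr [Finite G] {K : Subgroup G} (hK : K ⊔ N = ⊤) :
    ∃ s ⊆ (K : Set G), IrredModulo N s ∧ s.ncard = mIrr (G ⧸ N) := by
  have hlift (q : G ⧸ N) : ∃ k ∈ K, mk' N k = q := by
    rw [← mem_map, map_mk'_eq_top_iff.2 hK]
    exact mem_top q
  choose σ hσK hσ using hlift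
  replace hσ : Function.LeftInverse (mk' N) σ := hσ
  obtain ⟨t, ht, hcard⟩ := exists_irredSet_ncard_eq_mIrr (G := G ⧸ N)
  refine ⟨σ '' t, Set.image_subset_iff.2 fun q _ => hσK q,
    irredModulo_image_of_leftInverse hσ ht, ?_⟩
  rw [Set.ncard_image_of_injective _ hσ.injective, hcard]

end Modulo

section MinimalNormal

variable {N : Subgroup G} [N.Normal]

lemma normal_inf_of_sup_eq_top (hcomm : ∀ a ∈ N, ∀ b ∈ N, Commute a b) {H M : Subgroup G}
    (hHN : H ⊔ N = ⊤) (hHM : H ≤ M) : (M ⊓ N).Normal := by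
  refine ⟨fun y hy g => ⟨?_, ‹N.Normal›.conj_mem y hy.2 g⟩⟩
  have hg : g ∈ H ⊔ N := hHN ▸ mem_top g
  obtain ⟨h, hh, ν, hν, rfl⟩ := mem_sup_of_normal_right.1 hg
  have hconj : h * ν * y * (h * ν)⁻¹ = h * y * h⁻¹ := calc
    _ = h * (ν * y) * ν⁻¹ * h⁻¹ := by group
    _ = h * y * h⁻¹ := by rw [(hcomm ν hν y hy.2).eq]; group
  rw [hconj]
  exact M.mul_mem (M.mul_mem (hHM hh) hy.1) (M.inv_mem (hHM hh))

variable (hmin : ∀ K : Subgroup G, K.Normal → K ≤ N → K = ⊥ ∨ K = N)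
  (hcomm : ∀ a ∈ N, ∀ b ∈ N, Commute a b)
include hmin hcomm

lemma eq_or_eq_top_of_sup_eq_top {H L : Subgroup G} (hHN : H ⊔ N = ⊤) (hHL : H ≤ L) :
    L = H ∨ L = ⊤ := by
  rcases hmin _ (normal_inf_of_sup_eq_top hcomm hHN hHL) inf_le_right with hbot | hN
  · refine Or.inl (le_antisymm (fun l hl => ?_) hHL)
    have hl' : l ∈ H ⊔ N := hHN ▸ mem_top l
    obtain ⟨h, hh, ν, hν, rfl⟩ := mem_sup_of_normal_right.1 hl'
    have hνL : ν ∈ L ⊓ N := ⟨by simpa using mul_mem (inv_mem (hHL hh)) hl, hν⟩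
    rw [hbot, mem_bot] at hνL
    simpa [hνL] using hh
  · exact Or.inr (top_unique (hHN ▸ sup_le hHL (inf_eq_right.1 hN)))

lemma le_frattini_of_not_complementedFactor (hnc : ¬ ComplementedFactor ⊥ N) :
    N ≤ frattini G := by
  refine le_iInf₂ fun M (hM : IsCoatom M) => ?_
  by_contra hNM
  have hMN : M ⊔ N = ⊤ := hM.2 _ (left_lt_sup.2 hNM)
  rcases hmin _ (normal_inf_of_sup_eq_top hcomm hMN le_rfl) inf_le_right with hbot | hN
  · exact hnc ⟨M, bot_le, hMN, hbot⟩
  · exact hNM (inf_eq_right.1 hN)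

lemma eq_top_of_sup_eq_top_of_not_complementedFactor [Finite G] (hnc : ¬ ComplementedFactor ⊥ N)
    {H : Subgroup G} (hHN : H ⊔ N = ⊤) : H = ⊤ :=
  frattini_nongenerating (top_unique
    (hHN ▸ sup_le_sup_left (le_frattini_of_not_complementedFactor hmin hcomm hnc) H))

lemma IrredSet.irredModulo_or {s : Set G} (hs : IrredSet s) :
    IrredModulo N s ∨ ∃ x ∈ s, IrredModulo N (s \ {x}) := by
  by_cases h : ∃ x ∈ s, closure (s \ {x}) ⊔ N = ⊤
  · obtain ⟨x, hx, hxN⟩ := h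
    refine Or.inr ⟨x, hx, hxN, fun y hy hyN => hs.2 x hx (top_unique ?_)⟩
    -- `closure ((s \ {x}) \ {y})` supplements `N`, so it equals its proper overgroups.
    have hproper (z : G) (hz : z ∈ s) (hsub : (s \ {x}) \ {y} ⊆ s \ {z}) :
        closure (s \ {z}) = closure ((s \ {x}) \ {y}) :=
      (eq_or_eq_top_of_sup_eq_top hmin hcomm hyN (closure_mono hsub)).resolve_right (hs.2 z hz)
    have hxy : x ∈ closure (s \ {x}) := by
      rw [hproper x hx Set.sdiff_subset, ← hproper y hy.1 fun z hz => ⟨hz.1.1, hz.2⟩]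
      exact subset_closure ⟨hx, Ne.symm hy.2⟩
    calc ⊤ = closure s := hs.1.symm
      _ ≤ closure (insert x (s \ {x})) := closure_mono (by simp)
      _ ≤ closure (s \ {x}) := (closure_le _).2 (Set.insert_subset hxy subset_closure)
  · push Not at h
    exact Or.inl ⟨by rw [hs.1, top_sup_eq], h⟩

variable [Finite G]

lemma mIrr_le_mIrr_quotient_add_one : mIrr G ≤ mIrr (G ⧸ N) + 1 := by
  obtain ⟨s, hs, hcard⟩ := exists_irredSet_ncard_eq_mIrr (G := G)
  rw [← hcard]
  rcases hs.irredModulo_or hmin hcomm with hsN | ⟨x, hx, hxN⟩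
  · exact hsN.ncard_le_mIrr.trans (Nat.le_succ _)
  · have hle := hxN.ncard_le_mIrr
    rw [Set.ncard_sdiff_singleton_of_mem hx] at hle
    omega

lemma mIrr_le_mIrr_quotient (hnc : ¬ ComplementedFactor ⊥ N) : mIrr G ≤ mIrr (G ⧸ N) := by
  obtain ⟨s, hs, hcard⟩ := exists_irredSet_ncard_eq_mIrr (G := G)
  rw [← hcard]
  rcases hs.irredModulo_or hmin hcomm with hsN | ⟨x, hx, hxN⟩
  · exact hsN.ncard_le_mIrr
  · exact absurd (eq_top_of_sup_eq_top_of_not_complementedFactor hmin hcomm hnc hxN.1) (hs.2 x hx)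

lemma mIrr_quotient_le_mIrr (hnc : ¬ ComplementedFactor ⊥ N) : mIrr (G ⧸ N) ≤ mIrr G := by
  obtain ⟨s, -, hs, hcard⟩ := exists_irredModulo_subset_ncard_eq_mIrr (top_sup_eq N)
  rw [← hcard]
  exact IrredSet.ncard_le_mIrr
    ⟨eq_top_of_sup_eq_top_of_not_complementedFactor hmin hcomm hnc hs.1,
      fun x hx htop => hs.2 x hx (by rw [htop, top_sup_eq])⟩

lemma mIrr_quotient_add_one_le_mIrr (hc : ComplementedFactor ⊥ N) (hN : N ≠ ⊥) :
    mIrr (G ⧸ N) + 1 ≤ mIrr G := by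
  obtain ⟨K, -, hKN, hKN'⟩ := hc
  obtain ⟨s, hsK, hs, hcard⟩ := exists_irredModulo_subset_ncard_eq_mIrr hKN
  have hsK' : closure s ≤ K := (closure_le K).2 hsK
  obtain ⟨x, hxN, hx1⟩ := N.bot_or_exists_ne_one.resolve_left hN
  have hxK : x ∉ K := fun hxK => hx1 (by rw [← mem_bot, ← hKN']; exact ⟨hxK, hxN⟩)
  have hxs : x ∉ s := fun h => hxK (hsK h)
  have hirr : IrredSet (insert x s) := by
    refine ⟨(eq_or_eq_top_of_sup_eq_top hmin hcomm hs.1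
      (closure_mono (Set.subset_insert x s))).resolve_left
        fun h => hxK (hsK' (h ▸ subset_closure (Set.mem_insert x s))), ?_⟩
    rintro y (rfl | hy) htop
    · rw [Set.insert_sdiff_self_of_notMem hxs] at htop
      exact hN (by rw [← hKN', top_unique (htop ▸ hsK' : ⊤ ≤ K), top_inf_eq])
    · refine hs.2 y hy (top_unique (htop ▸ (closure_le _).2 ?_))
      rintro z ⟨rfl | hz, hzy⟩
      · exact mem_sup_right hxN
      · exact mem_sup_left (subset_closure ⟨hz, hzy⟩)
  calc mIrr (G ⧸ N) + 1 = (insert x s).ncard := by rw [Set.ncard_insert_of_notMem hxs, hcard]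
    _ ≤ mIrr G := hirr.ncard_le_mIrr

lemma mIrr_eq_mIrr_quotient_add_ite (hN : N ≠ ⊥) :
    mIrr G = mIrr (G ⧸ N) + if ComplementedFactor ⊥ N then 1 else 0 := by
  split_ifs with hc
  · exact le_antisymm (mIrr_le_mIrr_quotient_add_one hmin hcomm)
      (mIrr_quotient_add_one_le_mIrr hmin hcomm hc hN)
  · exact le_antisymm (mIrr_le_mIrr_quotient hmin hcomm hc) (mIrr_quotient_le_mIrr hmin hcomm hc)

end MinimalNormal

lemma commute_of_minimal_normal_of_isSolvable [Group.IsSolvable G] {N : Subgroup G} [N.Normal]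
    (hmin : ∀ K : Subgroup G, K.Normal → K ≤ N → K = ⊥ ∨ K = N) (hN : N ≠ ⊥) :
    ∀ a ∈ N, ∀ b ∈ N, Commute a b := by
  have hbot : ⁅N, N⁆ = ⊥ := (hmin _ inferInstance (commutator_le_right N N)).resolve_right
    (Group.IsSolvable.commutator_lt_of_ne_bot hN).ne
  exact fun a ha b hb =>
    (mem_centralizer_iff.1 (commutator_eq_bot_iff_le_centralizer.1 hbot ha) b hb).symm

section ChiefSeries

lemma ChiefFactor.of_comap {Q : Type*} [Group Q] {f : G →* Q} (hf : Function.Surjective f)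
    {A B : Subgroup Q} (h : ChiefFactor (A.comap f) (B.comap f)) : ChiefFactor A B := by
  obtain ⟨hA, hB, hAB, hmax⟩ := h
  refine ⟨map_comap_eq_self_of_surjective hf A ▸ hA.map f hf,
    map_comap_eq_self_of_surjective hf B ▸ hB.map f hf, (comap_lt_comap_of_surjective hf).1 hAB,
    fun K hK hAK hKB => ?_⟩
  exact (hmax _ (hK.comap f) (comap_mono hAK) (comap_mono hKB)).imp
    (comap_injective hf ·) (comap_injective hf ·)

lemma complementedFactor_comap_iff {Q : Type*} [Group Q] {f : G →* Q}
    (hf : Function.Surjective f) {A B : Subgroup Q} :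
    ComplementedFactor (A.comap f) (B.comap f) ↔ ComplementedFactor A B := by
  constructor
  · rintro ⟨K, hAK, hKB, hKB'⟩
    have hAK' : A ≤ K.map f := map_comap_eq_self_of_surjective hf A ▸ map_mono hAK
    have hAB : A ≤ B := (comap_le_comap_of_surjective hf).1 (hKB' ▸ inf_le_right)
    refine ⟨K.map f, hAK', ?_, le_antisymm ?_ (le_inf hAK' hAB)⟩
    · rw [← map_comap_eq_self_of_surjective hf B, ← Subgroup.map_sup, hKB,
        map_top_of_surjective f hf]
    · rintro _ ⟨⟨k, hk, rfl⟩, hkB⟩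
      exact (hKB' ▸ ⟨hk, hkB⟩ : k ∈ A.comap f)
  · rintro ⟨K, hAK, hKB, hKB'⟩
    exact ⟨K.comap f, comap_mono hAK, by rw [comap_sup_eq f K B hf, hKB, comap_top],
      by rw [← comap_inf, hKB']⟩

variable {m : ℕ} {c : Fin (m + 2) → Subgroup G}

lemma IsChiefSeries.monotone {n : ℕ} {c : Fin (n + 1) → Subgroup G} (hc : IsChiefSeries c) :
    Monotone c :=
  Fin.monotone_iff_le_succ.2 fun i => (hc.2.2 i).2.2.1.le

lemma IsChiefSeries.chiefFactor_bot_one (hc : IsChiefSeries c) : ChiefFactor ⊥ (c 1) :=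
  hc.1 ▸ hc.2.2 0

def quotientSeries (c : Fin (m + 2) → Subgroup G) [(c 1).Normal] :
    Fin (m + 1) → Subgroup (G ⧸ c 1) :=
  fun j => (c j.succ).map (mk' (c 1))

variable [(c 1).Normal]

lemma IsChiefSeries.comap_quotientSeries (hc : IsChiefSeries c) (j : Fin (m + 1)) :
    (quotientSeries c j).comap (mk' (c 1)) = c j.succ := by
  rw [quotientSeries, comap_map_eq, ker_mk', sup_eq_left]
  exact hc.monotone (by simp [Fin.le_def])

lemma IsChiefSeries.quotient (hc : IsChiefSeries c) : IsChiefSeries (quotientSeries c) := by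
  refine ⟨map_mk'_self (c 1), ?_, fun j => ChiefFactor.of_comap (mk'_surjective _) ?_⟩
  · rw [quotientSeries, Fin.succ_last, hc.2.1, map_top_of_surjective _ (mk'_surjective _)]
  · rw [hc.comap_quotientSeries, hc.comap_quotientSeries, Fin.succ_castSucc]
    exact hc.2.2 j.succ

lemma IsChiefSeries.complementedFactor_quotientSeries_iff (hc : IsChiefSeries c) (j : Fin m) :
    ComplementedFactor (quotientSeries c j.castSucc) (quotientSeries c j.succ) ↔
      ComplementedFactor (c j.succ.castSucc) (c j.succ.succ) := by
  rw [← complementedFactor_comap_iff (mk'_surjective (c 1)), hc.comap_quotientSeries,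
    hc.comap_quotientSeries, Fin.succ_castSucc]

end ChiefSeries

lemma natCard_subtype_fin_succ {m : ℕ} (P : Fin (m + 1) → Prop) :
    Nat.card {i // P i} = (if P 0 then 1 else 0) + Nat.card {j : Fin m // P j.succ} := by
  simp only [Nat.card_eq_fintype_card, Fintype.card_subtype, Fin.card_filter_univ_succ']

end

theorem mIrr_eq_card_complemented_chief_factors
    (G : Type*) [Group G] [Finite G] [Group.IsSolvable G] {n : ℕ}
    (c : Fin (n + 1) → Subgroup G) (hc : IsChiefSeries c) :
    mIrr G = Nat.card {i : Fin n // ComplementedFactor (c i.castSucc) (c i.succ)} := by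
  induction n generalizing G with
  | zero =>
    have : Subsingleton G := subsingleton_iff.1 (subsingleton_of_bot_eq_top (hc.1 ▸ hc.2.1))
    rw [mIrr_eq_zero, Nat.card_of_isEmpty]
  | succ m ih =>
    have hN := hc.chiefFactor_bot_one
    have := hN.2.1
    have hmin K hK hKN := hN.2.2.2 K hK bot_le hKN
    have hN' : c 1 ≠ ⊥ := hN.2.2.1.ne'
    rw [mIrr_eq_mIrr_quotient_add_ite hmin (commute_of_minimal_normal_of_isSolvable hmin hN') hN',
      ih _ _ hc.quotient, natCard_subtype_fin_succ, add_comm, Fin.castSucc_zero, hc.1]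
    congr 1
    exact Nat.card_congr (Equiv.subtypeEquivRight hc.complementedFactor_quotientSeries_iff)
end

section
/- If G is a finite soluble group satisfying the strong replacement property with d = d(G) the minimal number of generators, then every proper quotient of G can be generated by d - 1 elements. -/
open Subgroup
open scoped Classical

/-!
Replace one entry of a minimal generating sequence by a nontrivial element `x ∈ N`; a minimal
generating sequence is irredundant, so strong replacement applies. In `G ⧸ N` the new entry
becomes trivial, so the remaining `d(G) - 1` entries generate the quotient.
-/

section

variable {G : Type*} [Group G]

lemma dGen_le_ncard {s : Set G} (hs : s.Finite) (hgen : closure s = ⊤) : dGen G ≤ s.ncard :=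
  Nat.sInf_le ⟨s, hs, rfl, hgen⟩

lemma dGen_le_pred_of_closure_image_compl {n : ℕ} (g : Fin n → G) (i : Fin n)
    (hgen : closure (g '' {i}ᶜ) = ⊤) : dGen G ≤ n - 1 :=
  calc dGen G ≤ (g '' {i}ᶜ).ncard := dGen_le_ncard (Set.toFinite _) hgen
    _ ≤ ({i}ᶜ : Set (Fin n)).ncard := Set.ncard_image_le (Set.toFinite _)
    _ = n - 1 := by rw [Set.ncard_compl, Set.ncard_singleton, Nat.card_fin]

variable (G) in
lemma exists_closure_range_eq_top_of_dGen [Group.FG G] :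
    ∃ g : Fin (dGen G) → G, closure (Set.range g) = ⊤ := by
  obtain ⟨s, hs, hcard, hgen⟩ :
      dGen G ∈ {n | ∃ s : Set G, s.Finite ∧ s.ncard = n ∧ closure s = ⊤} :=
    Nat.sInf_mem <| by
      obtain ⟨s, hgen, hs⟩ := Group.fg_iff.mp ‹Group.FG G›
      exact ⟨s.ncard, s, hs, rfl, hgen⟩
  have := hs.to_subtype
  let e : Fin (dGen G) ≃ s := (Finite.equivFinOfCardEq (by rw [Nat.card_coe_set_eq, hcard])).symm
  refine ⟨fun i => e i, ?_⟩
  rwa [Set.range_comp', e.range_eq_univ, Set.image_univ, Subtype.range_coe]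

lemma irredSeq_of_closure_range_eq_top (g : Fin (dGen G) → G)
    (hgen : closure (Set.range g) = ⊤) : IrredSeq g :=
  ⟨hgen, fun i hi => by
    have hle := dGen_le_pred_of_closure_image_compl g i hi
    have hpos := i.pos
    omega⟩

lemma closure_range_update_one {ι : Type*} [DecidableEq ι] (g : ι → G) (i : ι) :
    closure (Set.range (Function.update g i 1)) = closure (g '' {i}ᶜ) := by
  refine le_antisymm (closure_le _ |>.mpr ?_) (closure_mono ?_)
  · rintro _ ⟨j, rfl⟩
    by_cases hj : j = i
    · subst hj
      simp [one_mem]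
    · exact subset_closure ⟨j, hj, (Function.update_of_ne hj _ _).symm⟩
  · rintro _ ⟨j, hj, rfl⟩
    exact ⟨j, Function.update_of_ne hj _ _⟩

lemma closure_image_compl_eq_top_of_map_eq_one {H ι : Type*} [Group H] [DecidableEq ι]
    {f : G →* H} (hf : Function.Surjective f) {g : ι → G} {i : ι} {x : G} (hx : f x = 1)
    (hgen : closure (Set.range (Function.update g i x)) = ⊤) :
    closure ((f ∘ g) '' {i}ᶜ) = ⊤ := by
  rw [← closure_range_update_one, ← hx, ← Function.comp_update, Set.range_comp,
    ← MonoidHom.map_closure, hgen, map_top_of_surjective f hf]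

end

theorem strongReplacement_proper_quotient_dGen_general
    (G : Type*) [Group G] [Finite G]
    (h : StrongReplacementProperty G)
    (N : Subgroup G) [N.Normal] (hN : N ≠ ⊥) :
    dGen (G ⧸ N) ≤ dGen G - 1 := by
  obtain ⟨x, hxN, hx1⟩ := N.bot_or_exists_ne_one.resolve_left hN
  obtain ⟨g, hgen⟩ := exists_closure_range_eq_top_of_dGen G
  obtain ⟨i, hupd⟩ := h _ g (irredSeq_of_closure_range_eq_top g hgen) x hx1
  exact dGen_le_pred_of_closure_image_compl _ i <|
    closure_image_compl_eq_top_of_map_eq_one (QuotientGroup.mk'_surjective N)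
      ((QuotientGroup.eq_one_iff x).mpr hxN) hupd

theorem strongReplacement_proper_quotient_dGen
    (G : Type*) [Group G] [Finite G] [Group.IsSolvable G]
    (h : StrongReplacementProperty G)
    (N : Subgroup G) [N.Normal] (hN : N ≠ ⊥) :
    dGen (G ⧸ N) ≤ dGen G - 1 :=
  strongReplacement_proper_quotient_dGen_general G h N hN
end

section
/- Let G = V^t ⋊ H where H is a cyclic group of prime order p and V is a faithful irreducible H-module over a finite field. Then d(G) = t + 1 and m(G) = t + 1, i.e., every irredundant generating set of G has size exactly t + 1. -/
open Subgroup
open scoped Classical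

/-- The diagonal action of `H` on `V^t`, as a map into the automorphisms of the
(multiplicatively written) group `V^t`. -/
noncomputable def diagPhi (H V : Type*) [Group H] [AddCommGroup V] [DistribMulAction H V]
    (t : ℕ) : H →* MulAut (Multiplicative (Fin t → V)) where
  toFun h := AddEquiv.toMultiplicative (DistribMulAction.toAddAut H (Fin t → V) h)
  map_one' := by
    ext x
    simp [AddEquiv.toMultiplicative, DistribMulAction.toAddAut]
    rfl
  map_mul' h₁ h₂ := by
    ext x
    simp [AddEquiv.toMultiplicative, DistribMulAction.toAddAut, mul_smul]
    rfl

/-- `G` is an elementary abelian `p`-group for some prime `p`. -/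
def IsElementaryAbelian (G : Type*) [Group G] : Prop :=
  ∃ p : ℕ, p.Prime ∧ (∀ a b : G, a * b = b * a) ∧ ∀ g : G, g ^ p = 1

/-- Data exhibiting `G` as `V^t ⋊ H` with `H` cyclic of prime order acting
diagonally via a faithful irreducible action on the finite module `V`. -/
structure VtHData (G : Type*) [Group G] where
  t : ℕ
  H : Type
  V : Type
  [grpH : Group H]
  [acgV : AddCommGroup V]
  [finV : Finite V]
  [act : DistribMulAction H V]
  [faithful : FaithfulSMul H V]
  card_prime : (Nat.card H).Prime
  nontriv : Nontrivial V
  irred : ∀ W : AddSubgroup V, (∀ (h : H), ∀ v ∈ W, h • v ∈ W) → W = ⊥ ∨ W = ⊤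
  iso : Nonempty (G ≃* SemidirectProduct (Multiplicative (Fin t → V)) H (diagPhi H V t))

/-!
Let `A` be the subring of `End V` generated by `H`. As `H` is abelian and `V` is irreducible,
Schur's lemma makes the finite ring `A` a field; `V` is a line over `A`, the `H`-invariant
subgroups of `V^t` are its `A`-subspaces, and `V^t` has dimension `t` over `A`.

A generating set contains an element `g` whose `H`-component `r` is nontrivial. Since `r - 1` is
invertible on `V^t`, a conjugate of `g` lies in `H`, so we may assume `g = r`, a generator of `H`.
Then the set generates iff the `V^t`-components of its other elements span `V^t` over `A`: a
generating set has at least `t` further elements, and in an irredundant one they form a basis.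
-/

section ActionRing

variable (H V : Type*) [Group H] [AddCommGroup V] [DistribMulAction H V]

def actionRing : Subring (AddMonoid.End V) :=
  Subring.closure (Set.range (DistribMulAction.toAddMonoidEnd H V))

def IsIrreducibleAction : Prop :=
  ∀ W : AddSubgroup V, (∀ h : H, ∀ v ∈ W, h • v ∈ W) → W = ⊥ ∨ W = ⊤

variable {H V} {ι : Type*}

lemma toAddMonoidEnd_mem_actionRing (h : H) :
    DistribMulAction.toAddMonoidEnd H V h ∈ actionRing H V :=
  Subring.subset_closure ⟨h, rfl⟩

lemma Submodule.smul_mem_of_actionRing (U : Submodule (actionRing H V) (ι → V)) (h : H)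
    {m : ι → V} (hm : m ∈ U) : h • m ∈ U :=
  U.smul_mem ⟨_, toAddMonoidEnd_mem_actionRing h⟩ hm

def AddSubgroup.toActionSubmodule (W : AddSubgroup (ι → V))
    (hW : ∀ h : H, ∀ m ∈ W, h • m ∈ W) : Submodule (actionRing H V) (ι → V) where
  toAddSubmonoid := W.toAddSubmonoid
  smul_mem' := by
    rintro ⟨a, ha⟩ m hm
    change (fun i => a (m i)) ∈ W
    induction ha using Subring.closure_induction generalizing m with
    | mem x hx =>
      obtain ⟨h, rfl⟩ := hx
      exact hW h m hm
    | zero => exact W.zero_mem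
    | one => exact hm
    | add x y _ _ hx hy => exact W.add_mem (hx hm) (hy hm)
    | neg x _ hx => exact W.neg_mem (hx hm)
    | mul x y _ _ hx hy => exact hx (hy hm)

@[simp]
lemma AddSubgroup.mem_toActionSubmodule {W : AddSubgroup (ι → V)}
    {hW : ∀ h : H, ∀ m ∈ W, h • m ∈ W} {m : ι → V} :
    m ∈ W.toActionSubmodule hW ↔ m ∈ W :=
  Iff.rfl

instance [IsMulCommutative H] : IsMulCommutative (actionRing H V) :=
  Subring.isMulCommutative_closure <| by
    rintro _ ⟨a, rfl⟩ _ ⟨b, rfl⟩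
    rw [← map_mul, ← map_mul, mul_comm' a b]

lemma actionRing_map_smul [IsMulCommutative H] (a : actionRing H V) (h : H) (v : V) :
    (a : AddMonoid.End V) (h • v) = h • (a : AddMonoid.End V) v :=
  DFunLike.congr_fun
    (congrArg Subtype.val (mul_comm' a ⟨_, toAddMonoidEnd_mem_actionRing h⟩)) v

lemma injective_of_actionRing_ne_zero [IsMulCommutative H] (hirr : IsIrreducibleAction H V)
    {a : actionRing H V} (ha : a ≠ 0) : Function.Injective (a : AddMonoid.End V) := by
  let K := AddMonoidHom.ker ((a : AddMonoid.End V) : V →+ V)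
  have hK : ∀ v, v ∈ K ↔ (a : AddMonoid.End V) v = 0 := fun v => AddMonoidHom.mem_ker
  have hKinv : ∀ h : H, ∀ v ∈ K, h • v ∈ K := by
    intro h v hv
    rw [hK] at hv ⊢
    rw [actionRing_map_smul, hv, smul_zero]
  rcases hirr K hKinv with hbot | htop
  · exact (AddMonoidHom.ker_eq_bot_iff _).1 hbot
  · refine absurd (Subtype.ext (AddMonoidHom.ext fun v => (hK v).1 ?_)) ha
    exact htop ▸ AddSubgroup.mem_top v

lemma isField_actionRing [IsMulCommutative H] [Finite V] [Nontrivial V]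
    (hirr : IsIrreducibleAction H V) : IsField (actionRing H V) where
  exists_pair_ne := by
    obtain ⟨v, hv⟩ := exists_ne (0 : V)
    exact ⟨0, 1, fun h => hv (DFunLike.congr_fun (congrArg Subtype.val h) v).symm⟩
  mul_comm := mul_comm'
  mul_inv_cancel {a} ha := by
    have : Finite (AddMonoid.End V) := Finite.of_injective _ DFunLike.coe_injective
    have hmul : Function.Injective (a * ·) := fun b c hbc =>
      Subtype.ext <| AddMonoidHom.ext fun v =>
        injective_of_actionRing_ne_zero hirr ha (DFunLike.congr_fun (congrArg Subtype.val hbc) v)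
    exact Finite.injective_iff_surjective.1 hmul 1

lemma finrank_actionRing_pi [IsMulCommutative H] [Finite V] [Nontrivial V]
    (hirr : IsIrreducibleAction H V) [Fintype ι] :
    Module.finrank (actionRing H V) (ι → V) = Fintype.card ι := by
  let _ := (isField_actionRing hirr).toField
  obtain ⟨v, hv⟩ := exists_ne (0 : V)
  have hline : Module.finrank (actionRing H V) V = 1 := by
    refine (finrank_eq_one_iff_of_nonzero' v hv).2 fun w => Submodule.mem_span_singleton.1 ?_
    let U := Submodule.span (actionRing H V) {v}
    have hU : ∀ h : H, ∀ w ∈ U.toAddSubgroup, h • w ∈ U.toAddSubgroup := fun h _ hw =>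
      U.smul_mem ⟨_, toAddMonoidEnd_mem_actionRing h⟩ hw
    rcases hirr _ hU with hbot | htop
    · exact absurd (AddSubgroup.mem_bot.1 (hbot ▸ Submodule.mem_span_singleton_self v)) hv
    · exact (htop ▸ AddSubgroup.mem_top w : w ∈ U.toAddSubgroup)
  simp [Module.finrank_pi_fintype, hline]

lemma surjective_smul_sub_self [IsMulCommutative H] [FaithfulSMul H V] [Finite V]
    [Nontrivial V] (hirr : IsIrreducibleAction H V) {r : H} (hr : r ≠ 1) :
    Function.Surjective fun m : ι → V => r • m - m := by
  let _ := (isField_actionRing hirr).toField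
  let a : actionRing H V := ⟨_, sub_mem (toAddMonoidEnd_mem_actionRing r) (one_mem _)⟩
  have ha : a ≠ 0 := fun ha => hr <| FaithfulSMul.eq_of_smul_eq_smul fun v : V => by
    have hv : r • v - v = 0 := DFunLike.congr_fun (congrArg Subtype.val ha) v
    rw [one_smul, ← sub_eq_zero, hv]
  intro m
  refine ⟨a⁻¹ • m, ?_⟩
  change a • a⁻¹ • m = m
  rw [smul_smul, mul_inv_cancel₀ ha, one_smul]

end ActionRing

section LinearAlgebra

variable {R K M α : Type*} [AddCommGroup M] {f : α → M} {T : Set α}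

lemma finrank_le_ncard_of_span_image_eq_top [Ring R] [StrongRankCondition R] [Module R M]
    (hT : T.Finite) (hspan : Submodule.span R (f '' T) = ⊤) : Module.finrank R M ≤ T.ncard := by
  have := (hT.image f).fintype
  calc Module.finrank R M = Module.finrank R (Submodule.span R (f '' T)) := by
        rw [hspan, finrank_top]
    _ ≤ (f '' T).toFinset.card := finrank_span_le_card _
    _ = (f '' T).ncard := (Set.ncard_eq_toFinset_card' _).symm
    _ ≤ T.ncard := Set.ncard_image_le hT

lemma ncard_eq_finrank_of_span_image_minimal [DivisionRing K] [Module K M]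
    (hspan : Submodule.span K (f '' T) = ⊤)
    (hmin : ∀ x ∈ T, Submodule.span K (f '' (T \ {x})) ≠ ⊤) : T.ncard = Module.finrank K M := by
  have hli : LinearIndepOn K f T := linearIndepOn_iff_notMem_span.2 fun x hx hmem =>
    hmin x hx <| by
    rw [eq_top_iff, ← hspan, Submodule.span_le]
    rintro _ ⟨y, hy, rfl⟩
    by_cases hyx : y = x
    · exact hyx ▸ hmem
    · exact Submodule.subset_span ⟨y, ⟨hy, hyx⟩, rfl⟩
  let b := Module.Basis.mk hli.linearIndependent (by rw [← Set.image_eq_range, hspan])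
  rw [Module.finrank_eq_nat_card_basis b, Nat.card_coe_set_eq]

end LinearAlgebra

section GeneratingSets

variable {G G' : Type*} [Group G] [Group G']

lemma closure_image_mulEquiv_eq_top (e : G ≃* G') {s : Set G} (hs : closure s = ⊤) :
    closure (e '' s) = ⊤ := by
  rw [← MulEquiv.coe_toMonoidHom, ← MonoidHom.map_closure, hs]
  exact map_top_of_surjective _ e.surjective

lemma IrredSet.image_mulEquiv (e : G ≃* G') {s : Set G} (hs : IrredSet s) : IrredSet (e '' s) := by
  refine ⟨closure_image_mulEquiv_eq_top e hs.1, ?_⟩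
  rintro _ ⟨x, hx, rfl⟩ hgen
  apply hs.2 x hx
  have := closure_image_mulEquiv_eq_top e.symm hgen
  rwa [← Set.image_singleton, ← Set.image_sdiff e.injective, ← MulEquiv.coe_toEquiv,
    ← MulEquiv.coe_toEquiv, MulEquiv.toEquiv_symm, Equiv.symm_image_image] at this

lemma irredSet_of_forall_ncard_le {s : Set G} (hs : s.Finite) (hgen : closure s = ⊤)
    (hle : ∀ s' : Set G, s'.Finite → closure s' = ⊤ → s.ncard ≤ s'.ncard) : IrredSet s := by
  refine ⟨hgen, fun x hx hx' => ?_⟩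
  have hcard := hle _ hs.sdiff hx'
  have := Set.ncard_sdiff_singleton_add_one hx hs
  omega

lemma dGen_eq_of_forall_le {n : ℕ} (hex : ∃ s : Set G, s.Finite ∧ s.ncard = n ∧ closure s = ⊤)
    (hle : ∀ s : Set G, s.Finite → closure s = ⊤ → n ≤ s.ncard) : dGen G = n :=
  le_antisymm (Nat.sInf_le hex) <|
    le_csInf ⟨n, hex⟩ fun _ ⟨s, hs, hcard, hgen⟩ => hcard ▸ hle s hs hgen

lemma mIrr_eq_of_forall_eq {n : ℕ} (hex : ∃ s : Set G, s.Finite ∧ s.ncard = n ∧ IrredSet s)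
    (heq : ∀ s : Set G, s.Finite → IrredSet s → s.ncard = n) : mIrr G = n := by
  have : {m | ∃ s : Set G, s.Finite ∧ s.ncard = m ∧ IrredSet s} = {n} :=
    Set.eq_singleton_iff_unique_mem.2 ⟨hex, fun _ ⟨s, hs, hcard, hirr⟩ => hcard ▸ heq s hs hirr⟩
  rw [mIrr, this, csSup_singleton]

lemma isMulCommutative_and_nontrivial_of_prime_card (hp : (Nat.card G).Prime) :
    IsMulCommutative G ∧ Nontrivial G := by
  have := Fact.mk hp
  have : Finite G := Nat.finite_of_card_ne_zero hp.ne_zero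
  exact ⟨(isCyclic_of_prime_card rfl).isMulCommutative,
    Finite.one_lt_card_iff_nontrivial.1 hp.one_lt⟩

end GeneratingSets

section VtH

open SemidirectProduct Submodule

variable {H V : Type*} [Group H] [AddCommGroup V] [DistribMulAction H V] {t : ℕ}

local notation "G" => SemidirectProduct (Multiplicative (Fin t → V)) H (diagPhi H V t)

def vecPart (g : G) : Fin t → V := Multiplicative.toAdd g.left

@[simp]
lemma vecPart_inl (m : Fin t → V) : vecPart (inl (Multiplicative.ofAdd m) : G) = m := rfl

@[simp]
lemma vecPart_inr (h : H) : vecPart (inr h : G) = 0 := rfl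

lemma vecPart_mul (a b : G) : vecPart (a * b) = vecPart a + a.right • vecPart b := rfl

lemma vecPart_inv (a : G) : vecPart a⁻¹ = a.right⁻¹ • -vecPart a := rfl

def semidirectOfSubmodule (U : Submodule (actionRing H V) (Fin t → V)) : Subgroup G where
  carrier := {g | vecPart g ∈ U}
  one_mem' := U.zero_mem
  mul_mem' {a b} ha hb := by
    change vecPart a + a.right • vecPart b ∈ U
    exact U.add_mem ha (U.smul_mem_of_actionRing _ hb)
  inv_mem' {a} ha := by
    change a.right⁻¹ • -vecPart a ∈ U
    exact U.smul_mem_of_actionRing _ (U.neg_mem ha)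

lemma span_vecPart_eq_top_of_closure_eq_top {S : Set G} (hS : closure S = ⊤) :
    span (actionRing H V) (vecPart '' S) = ⊤ := by
  refine eq_top_iff'.2 fun m => ?_
  have hle : closure S ≤ semidirectOfSubmodule (span (actionRing H V) (vecPart '' S)) :=
    (closure_le _).2 fun s hs => subset_span ⟨s, hs, rfl⟩
  exact hle (hS ▸ Subgroup.mem_top (inl (Multiplicative.ofAdd m)))

lemma closure_eq_top_of_span_vecPart_eq_top {S : Set G} (hH : ∀ h : H, inr h ∈ closure S)
    (hspan : span (actionRing H V) (vecPart '' S) = ⊤) : closure S = ⊤ := by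
  let U : AddSubgroup (Fin t → V) := Subgroup.toAddSubgroup' ((closure S).comap inl)
  have hU : ∀ m, m ∈ U ↔ (inl (Multiplicative.ofAdd m) : G) ∈ closure S := fun _ => Iff.rfl
  have hUinv : ∀ h : H, ∀ m ∈ U, h • m ∈ U := by
    intro h m hm
    rw [hU] at hm ⊢
    rw [show Multiplicative.ofAdd (h • m) = diagPhi H V t h (Multiplicative.ofAdd m) from rfl,
      inl_aut]
    exact mul_mem (mul_mem (hH h) hm) (hH h⁻¹)
  have hUtop : U.toActionSubmodule hUinv = ⊤ := by
    refine eq_top_iff.2 (hspan ▸ span_le.2 ?_)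
    rintro _ ⟨s, hs, rfl⟩
    rw [SetLike.mem_coe, AddSubgroup.mem_toActionSubmodule, hU]
    have hs' : inl s.left = s * (inr s.right)⁻¹ := by
      rw [eq_mul_inv_iff_mul_eq, inl_left_mul_inr_right]
    exact hs' ▸ mul_mem (subset_closure hs) (inv_mem (hH _))
  refine (Subgroup.eq_top_iff' _).2 fun g => ?_
  rw [← inl_left_mul_inr_right g]
  have hleft : g.left.toAdd ∈ U.toActionSubmodule hUinv := hUtop ▸ Submodule.mem_top
  exact mul_mem ((hU _).1 hleft) (hH _)

lemma span_vecPart_sdiff_inr {S : Set G} {r : H} (hrS : inr r ∈ S) :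
    span (actionRing H V) (vecPart '' (S \ {inr r})) = span (actionRing H V) (vecPart '' S) := by
  conv_rhs => rw [← Set.insert_eq_of_mem hrS, ← Set.insert_sdiff_singleton]
  rw [Set.image_insert_eq, vecPart_inr, span_insert_zero]

lemma closure_eq_top_of_span_vecPart_sdiff_inr {S : Set G} {r : H} (hr : zpowers r = ⊤)
    (hrS : inr r ∈ S) (hspan : span (actionRing H V) (vecPart '' (S \ {inr r})) = ⊤) :
    closure S = ⊤ := by
  refine closure_eq_top_of_span_vecPart_eq_top (fun h => ?_) (span_vecPart_sdiff_inr hrS ▸ hspan)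
  obtain ⟨k, rfl⟩ := mem_zpowers_iff.1 (hr ▸ Subgroup.mem_top h)
  rw [map_zpow]
  exact zpow_mem (subset_closure hrS) k

lemma exists_conj_eq_inr (g : G)
    (hsurj : Function.Surjective fun m : Fin t → V => g.right • m - m) :
    ∃ x : G, x * g * x⁻¹ = inr g.right := by
  obtain ⟨w, hw⟩ := hsurj (vecPart g)
  refine ⟨inl (Multiplicative.ofAdd w), SemidirectProduct.ext ?_ (by simp)⟩
  change vecPart (inl (Multiplicative.ofAdd w) * g * (inl (Multiplicative.ofAdd w))⁻¹) = 0
  simp only [vecPart_mul, vecPart_inv, vecPart_inl, mul_right, right_inl, one_mul, inv_one,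
    one_smul, smul_neg, ← hw]
  abel

variable [Finite V] [Nontrivial V]

lemma exists_closure_eq_top_ncard_eq (hp : (Nat.card H).Prime) (hirr : IsIrreducibleAction H V) :
    ∃ S : Set G, S.Finite ∧ S.ncard = t + 1 ∧ closure S = ⊤ := by
  obtain ⟨_, _⟩ := isMulCommutative_and_nontrivial_of_prime_card hp
  have := Fact.mk hp
  let _ := (isField_actionRing hirr).toField
  obtain ⟨r, hr⟩ := exists_ne (1 : H)
  let b := Module.finBasisOfFinrankEq (actionRing H V) (Fin t → V)
    ((finrank_actionRing_pi hirr).trans (Fintype.card_fin t))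
  let f : Fin t → G := fun i => inl (Multiplicative.ofAdd (b i))
  have hf : Function.Injective f :=
    inl_injective.comp (Multiplicative.ofAdd.injective.comp b.injective)
  have hrf : inr r ∉ Set.range f := fun ⟨i, hi⟩ => hr (congrArg SemidirectProduct.right hi).symm
  refine ⟨insert (inr r) (Set.range f), (Set.finite_range f).insert _, ?_, ?_⟩
  · rw [Set.ncard_insert_of_notMem hrf, Set.ncard_range_of_injective hf, Nat.card_eq_fintype_card,
      Fintype.card_fin]
  · refine closure_eq_top_of_span_vecPart_sdiff_inr (zpowers_eq_top_of_prime_card rfl hr)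
      (Set.mem_insert _ _) ?_
    rw [Set.insert_sdiff_self_of_notMem hrf, ← Set.range_comp]
    exact b.span_eq

variable [FaithfulSMul H V]

lemma exists_mulAut_inr_mem [IsMulCommutative H] [Nontrivial H]
    (hirr : IsIrreducibleAction H V) {S : Set G} (hS : closure S = ⊤) :
    ∃ (e : MulAut G) (r : H), r ≠ 1 ∧ inr r ∈ e '' S := by
  obtain ⟨g, hgS, hg⟩ : ∃ g ∈ S, g.right ≠ 1 := by
    by_contra! hS1
    obtain ⟨r, hr⟩ := exists_ne (1 : H)
    have hle : closure S ≤ (rightHom : G →* H).ker := (closure_le _).2 hS1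
    exact hr (hle (hS ▸ Subgroup.mem_top (inr r)))
  obtain ⟨x, hx⟩ := exists_conj_eq_inr g (surjective_smul_sub_self hirr hg)
  exact ⟨MulAut.conj x, g.right, hg, g, hgS, hx⟩

lemma add_one_le_ncard_of_closure_eq_top [IsMulCommutative H] [Nontrivial H]
    (hirr : IsIrreducibleAction H V) {S : Set G} (hfin : S.Finite) (hS : closure S = ⊤) :
    t + 1 ≤ S.ncard := by
  let _ := (isField_actionRing hirr).toField
  obtain ⟨e, r, -, hrS⟩ := exists_mulAut_inr_mem hirr hS
  have hspan := span_vecPart_eq_top_of_closure_eq_top (closure_image_mulEquiv_eq_top e hS)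
  rw [← span_vecPart_sdiff_inr hrS] at hspan
  have hcard := finrank_le_ncard_of_span_image_eq_top (hfin.image e).sdiff hspan
  rw [finrank_actionRing_pi hirr, Fintype.card_fin] at hcard
  rw [← Set.ncard_image_of_injective S e.injective,
    ← Set.ncard_sdiff_singleton_add_one hrS (hfin.image e)]
  exact Nat.succ_le_succ hcard

lemma ncard_eq_add_one_of_irredSet (hp : (Nat.card H).Prime) (hirr : IsIrreducibleAction H V)
    {S : Set G} (hfin : S.Finite) (hS : IrredSet S) : S.ncard = t + 1 := by
  obtain ⟨_, _⟩ := isMulCommutative_and_nontrivial_of_prime_card hp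
  have := Fact.mk hp
  let _ := (isField_actionRing hirr).toField
  obtain ⟨e, r, hr, hrS⟩ := exists_mulAut_inr_mem hirr hS.1
  have hS' := hS.image_mulEquiv e
  have hmin : ∀ s ∈ e '' S \ {inr r},
      span (actionRing H V) (vecPart '' ((e '' S \ {inr r}) \ {s})) ≠ ⊤ := by
    intro s hs hspan
    refine hS'.2 s hs.1 (closure_eq_top_of_span_vecPart_sdiff_inr
      (zpowers_eq_top_of_prime_card rfl hr) ⟨hrS, fun hrs => hs.2 hrs.symm⟩ ?_)
    rwa [Set.sdiff_sdiff_comm]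
  have hcard := ncard_eq_finrank_of_span_image_minimal
    ((span_vecPart_sdiff_inr hrS).trans (span_vecPart_eq_top_of_closure_eq_top hS'.1)) hmin
  rw [finrank_actionRing_pi hirr, Fintype.card_fin] at hcard
  rw [← Set.ncard_image_of_injective S e.injective,
    ← Set.ncard_sdiff_singleton_add_one hrS (hfin.image e), hcard]

end VtH

theorem dGen_and_mIrr_of_VtH_general
    (H V : Type*) [Group H] [AddCommGroup V] [Finite V]
    [DistribMulAction H V] [FaithfulSMul H V] (p t : ℕ) (hp : p.Prime)
    (hcard : Nat.card H = p) (hnt : Nontrivial V)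
    (hirr : ∀ W : AddSubgroup V, (∀ (h : H), ∀ v ∈ W, h • v ∈ W) → W = ⊥ ∨ W = ⊤) :
    dGen (SemidirectProduct (Multiplicative (Fin t → V)) H (diagPhi H V t)) = t + 1 ∧
    mIrr (SemidirectProduct (Multiplicative (Fin t → V)) H (diagPhi H V t)) = t + 1 ∧
    ∀ s : Set (SemidirectProduct (Multiplicative (Fin t → V)) H (diagPhi H V t)),
      s.Finite → IrredSet s → s.ncard = t + 1 := by
  subst hcard
  obtain ⟨_, _⟩ := isMulCommutative_and_nontrivial_of_prime_card hp
  have hlow := fun S => add_one_le_ncard_of_closure_eq_top (t := t) (S := S) hirr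
  have hirred := fun S => ncard_eq_add_one_of_irredSet (t := t) (S := S) hp hirr
  obtain ⟨S, hfin, hcard, hgen⟩ := exists_closure_eq_top_ncard_eq (t := t) hp hirr
  have hS : IrredSet S :=
    irredSet_of_forall_ncard_le hfin hgen fun s hs hgen' => hcard ▸ hlow s hs hgen'
  exact ⟨dGen_eq_of_forall_le ⟨S, hfin, hcard, hgen⟩ hlow,
    mIrr_eq_of_forall_eq ⟨S, hfin, hcard, hS⟩ hirred, hirred⟩

theorem dGen_and_mIrr_of_VtH
    (H V : Type*) [Group H] [AddCommGroup V] [Finite H] [Finite V]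
    [DistribMulAction H V] [FaithfulSMul H V] (p t : ℕ) (hp : p.Prime)
    (hcard : Nat.card H = p) (hnt : Nontrivial V)
    (hirr : ∀ W : AddSubgroup V, (∀ (h : H), ∀ v ∈ W, h • v ∈ W) → W = ⊥ ∨ W = ⊤) :
    dGen (SemidirectProduct (Multiplicative (Fin t → V)) H (diagPhi H V t)) = t + 1 ∧
    mIrr (SemidirectProduct (Multiplicative (Fin t → V)) H (diagPhi H V t)) = t + 1 ∧
    ∀ s : Set (SemidirectProduct (Multiplicative (Fin t → V)) H (diagPhi H V t)),
      s.Finite → IrredSet s → s.ncard = t + 1 :=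
  dGen_and_mIrr_of_VtH_general H V p t hp hcard hnt hirr
end

section
/- Let G be a finite soluble group with trivial Frattini subgroup, let F = N_1 × ... × N_t be the Fitting subgroup written as a direct product of t minimal normal subgroups, and let H be a complement of F in G. If for each i, y_i is a nontrivial element of N_i and {x_1,...,x_μ} is an irredundant generating sequence of H, then {y_1,...,y_t,x_1,...,x_μ} is an irredundant generating sequence of G. -/
open Subgroup
open scoped Classical

/-!
Each `N i` is abelian (a minimal normal subgroup of a soluble group) and distinct `N i` commute,
so `F = ⨆ i, N i` centralises every `N i`. If `S` contains `H` and a nontrivial element of `N i`,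
then `N i ⊓ S` is normalised by `S` and by `F`, hence by `S ⊔ F = G`, and minimality gives
`N i ≤ S`: so the sequence generates `G`. Without `y j` everything lies in `F_j ⊔ H`, where
`F_j = ⨆ k ≠ j, N k`; without `x j` it lies in `K ⊔ F` with `K = ⟨x k | k ≠ j⟩ ≤ H`. As
`H ⊓ F = ⊥`, the modular law turns either join being `G` into `F_j = F` or `K = H`.
-/

open scoped Pointwise

theorem Fin.exists_fin_add {m n : ℕ} {P : Fin (m + n) → Prop} :
    (∃ i, P i) ↔ (∃ i, P (castAdd n i)) ∨ ∃ j, P (natAdd m j) := by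
  simpa [not_and_or, or_iff_not_imp_left] using (forall_fin_add fun i => ¬P i).not

theorem Fin.castAdd_ne_natAdd {m n : ℕ} (i : Fin m) (j : Fin n) : castAdd n i ≠ natAdd m j :=
  ne_of_lt (by rw [Fin.lt_def, val_castAdd, val_natAdd]; omega)

section Append

variable {α : Type*} {t m : ℕ} (y : Fin t → α) (x : Fin m → α)

theorem Fin.range_append : Set.range (Fin.append y x) = Set.range y ∪ Set.range x := by
  ext z
  simp [Fin.exists_fin_add]

theorem Fin.image_append_compl_castAdd (j : Fin t) :
    Fin.append y x '' {Fin.castAdd m j}ᶜ = y '' {j}ᶜ ∪ Set.range x := by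
  ext z
  simp [Fin.exists_fin_add, (Fin.castAdd_ne_natAdd _ _).symm]

theorem Fin.image_append_compl_natAdd (j : Fin m) :
    Fin.append y x '' {Fin.natAdd t j}ᶜ = Set.range y ∪ x '' {j}ᶜ := by
  ext z
  simp [Fin.exists_fin_add, Fin.castAdd_ne_natAdd]

end Append

namespace Subgroup

variable {G : Type*} [Group G]

/-- Dedekind's modular law, which holds as soon as the join `A ⊔ C` is the product set. -/
theorem eq_of_le_of_sup_eq_top {A B C : Subgroup G} (hAC : ((A ⊔ C : Subgroup G) : Set G) = A * C)
    (hAB : A ≤ B) (hsup : A ⊔ C = ⊤) (hinf : C ⊓ B = ⊥) : A = B := by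
  have h := mul_inf_assoc A C B hAB
  rw [hinf, ← hAC, hsup, coe_bot, Set.mul_singleton, coe_top, Set.univ_inter] at h
  exact SetLike.coe_injective (by simpa using h)

theorem eq_bot_of_commutator_eq_self [Group.IsSolvable G] {K : Subgroup G} (h : ⁅K, K⁆ = K) :
    K = ⊥ := by
  obtain ⟨n, hn⟩ := Group.IsSolvable.solvable (G := G)
  have hK : ∀ n, K ≤ derivedSeries G n := by
    intro n
    induction n with
    | zero => exact le_top
    | succ n ih => exact h ▸ derivedSeries_succ G n ▸ commutator_mono ih ih
  exact le_bot_iff.mp (hn ▸ hK n)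

end Subgroup

section MinimalNormal

variable {G : Type*} [Group G]

theorem IsMinimalNormal.commutator_eq_bot [Group.IsSolvable G] {N : Subgroup G}
    (hN : IsMinimalNormal N) : ⁅N, N⁆ = ⊥ := by
  have := hN.1
  rcases hN.2.2 ⁅N, N⁆ inferInstance (commutator_le_left N N) with h | h
  · exact h
  · exact absurd (eq_bot_of_commutator_eq_self h) hN.2.1

theorem IsMinimalNormal.le_of_mem {N S C : Subgroup G} (hN : IsMinimalNormal N)
    (hSC : S ⊔ C = ⊤) (hC : C ≤ centralizer N) {y : G} (hyN : y ∈ N) (hyS : y ∈ S)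
    (hy : y ≠ 1) : N ≤ S := by
  have := hN.1
  have hS : S ≤ normalizer ((N ⊓ S : Subgroup G) : Set G) :=
    (le_inf le_normalizer_of_normal le_normalizer).trans inf_normalizer_le_normalizer_inf
  have hC' : C ≤ normalizer ((N ⊓ S : Subgroup G) : Set G) :=
    hC.trans ((centralizer_le inf_le_left).trans (centralizer_le_normalizer _))
  have hnormal : (N ⊓ S).Normal :=
    normalizer_eq_top_iff.mp (top_unique (hSC ▸ sup_le hS hC'))
  rcases hN.2.2 _ hnormal inf_le_left with h | h
  · exact absurd (mem_bot.mp (h ▸ mem_inf.mpr ⟨hyN, hyS⟩)) hy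
  · exact inf_eq_left.mp h

theorem iSupIndep.iSup_le_centralizer {ι : Type*} {N : ι → Subgroup G} (hind : iSupIndep N)
    (hnormal : ∀ i, (N i).Normal) (hab : ∀ i, ⁅N i, N i⁆ = ⊥) (i : ι) :
    ⨆ j, N j ≤ centralizer (N i) := by
  refine iSup_le fun j => ?_
  rcases eq_or_ne j i with rfl | hji
  · exact commutator_eq_bot_iff_le_centralizer.mp (hab j)
  · exact fun a ha b hb =>
      commute_of_normal_of_disjoint _ _ (hnormal i) (hnormal j) (hind.pairwiseDisjoint hji.symm)
        b a hb ha

theorem eq_top_of_sup_iSup_eq_top [Group.IsSolvable G] {ι : Type*} {N : ι → Subgroup G}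
    (hmin : ∀ i, IsMinimalNormal (N i)) (hind : iSupIndep N) {S : Subgroup G}
    (hS : S ⊔ ⨆ i, N i = ⊤) (hSN : ∀ i, ∃ y ∈ N i, y ∈ S ∧ y ≠ 1) : S = ⊤ := by
  have hNS : ∀ i, N i ≤ S := fun i =>
    let ⟨_, hyN, hyS, hy⟩ := hSN i
    (hmin i).le_of_mem hS
      (hind.iSup_le_centralizer (fun i => (hmin i).1) (fun i => (hmin i).commutator_eq_bot) i)
      hyN hyS hy
  exact top_unique (hS ▸ sup_le le_rfl (iSup_le hNS))

theorem iSupIndep.sup_ne_top_of_inf_iSup_eq_bot {ι : Type*} {N : ι → Subgroup G}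
    (hind : iSupIndep N) (hnormal : ∀ i, (N i).Normal) {j : ι} (hj : N j ≠ ⊥) {H : Subgroup G}
    (hH : H ⊓ ⨆ i, N i = ⊥) : (⨆ k, ⨆ _ : k ≠ j, N k) ⊔ H ≠ ⊤ := by
  intro hsup
  have hF : ⨆ k, ⨆ _ : k ≠ j, N k = ⨆ i, N i :=
    eq_of_le_of_sup_eq_top (normal_mul _ _) (iSup₂_le fun k _ => le_iSup N k) hsup hH
  exact hj (disjoint_self.mp ((hind j).mono_right (hF ▸ le_iSup N j)))

end MinimalNormal

theorem irredSeq_append_of_fitting_complement_general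
    (G : Type*) [Group G] [Group.IsSolvable G]
    (F : Subgroup G) {t : ℕ} (N : Fin t → Subgroup G)
    (hmin : ∀ i, IsMinimalNormal (N i)) (hind : iSupIndep N) (hsup : ⨆ i, N i = F)
    (H : Subgroup G) (hcompl : H ⊔ F = ⊤ ∧ H ⊓ F = ⊥)
    (y : Fin t → G) (hy : ∀ i, y i ∈ N i) (hy1 : ∀ i, y i ≠ 1)
    {m : ℕ} (x : Fin m → G)
    (hxgen : Subgroup.closure (Set.range x) = H)
    (hxirr : ∀ i : Fin m, Subgroup.closure (x '' {i}ᶜ) ≠ H) :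
    IrredSeq (Fin.append y x) := by
  obtain ⟨hHF, hHF_bot⟩ := hcompl
  subst hsup
  have hnormal := fun i => (hmin i).1
  refine ⟨?_, Fin.addCases (fun j => ?_) (fun j => ?_)⟩
  · refine eq_top_of_sup_iSup_eq_top hmin hind (top_unique (hHF ▸ sup_le_sup_right ?_ _))
      fun i => ⟨y i, hy i, subset_closure ⟨Fin.castAdd m i, Fin.append_left y x i⟩, hy1 i⟩
    rw [← hxgen, Fin.range_append, Subgroup.closure_union]
    exact le_sup_right
  · rw [Fin.image_append_compl_castAdd, Subgroup.closure_union, hxgen]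
    refine fun h => hind.sup_ne_top_of_inf_iSup_eq_bot hnormal (hmin j).2.1 hHF_bot
      (top_unique (h ▸ sup_le_sup_right ((closure_le _).mpr ?_) H))
    rintro _ ⟨k, hk, rfl⟩
    exact mem_iSup_of_mem k (mem_iSup_of_mem hk (hy k))
  · rw [Fin.image_append_compl_natAdd, Subgroup.closure_union]
    intro h
    have hyF : closure (Set.range y) ≤ ⨆ i, N i :=
      (closure_le _).mpr (Set.range_subset_iff.mpr fun i => mem_iSup_of_mem i (hy i))
    refine hxirr j (eq_of_le_of_sup_eq_top (mul_normal _ _)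
      (hxgen ▸ closure_mono (Set.image_subset_range _ _)) ?_ (inf_comm H _ ▸ hHF_bot))
    rw [sup_comm]
    exact top_unique (h ▸ sup_le_sup_right hyF _)

theorem irredSeq_append_of_fitting_complement
    (G : Type*) [Group G] [Finite G] [Group.IsSolvable G] (hfr : frattini G = ⊥)
    (F : Subgroup G) (hF : IsFitting F) {t : ℕ} (N : Fin t → Subgroup G)
    (hmin : ∀ i, IsMinimalNormal (N i)) (hind : iSupIndep N) (hsup : ⨆ i, N i = F)
    (H : Subgroup G) (hcompl : H ⊔ F = ⊤ ∧ H ⊓ F = ⊥)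
    (y : Fin t → G) (hy : ∀ i, y i ∈ N i) (hy1 : ∀ i, y i ≠ 1)
    {m : ℕ} (x : Fin m → G) (hxH : ∀ i, x i ∈ H)
    (hxgen : Subgroup.closure (Set.range x) = H)
    (hxirr : ∀ i : Fin m, Subgroup.closure (x '' {i}ᶜ) ≠ H) :
    IrredSeq (Fin.append y x) :=
  irredSeq_append_of_fitting_complement_general G F N hmin hind hsup H hcompl y hy hy1 x hxgen hxirr
end

section
/- Let G be a finite soluble group, F its Fitting subgroup with complement H, N a minimal normal subgroup of G contained in F, and F = N × M for a normal subgroup M of G. Then for any nontrivial h ∈ H and nontrivial elements generating the other minimal normal factors, the subgroup generated by M, H, and h (i.e., MH) is a complement of N in G; in particular replacing a generator of N by an element of H in a generating sequence yields a proper subgroup complementing N. -/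
open Subgroup
open scoped Classical

/-- Dedekind's modular law; normality of `A` makes `A ⊔ B` the product set `A * B`. -/
theorem Subgroup.sup_inf_assoc_of_le_of_normal {G : Type*} [Group G] {A C : Subgroup G}
    (B : Subgroup G) [A.Normal] (h : A ≤ C) : (A ⊔ B) ⊓ C = A ⊔ B ⊓ C :=
  SetLike.coe_injective <| by
    rw [coe_inf, normal_mul, normal_mul, mul_inf_assoc _ _ _ h]

theorem sup_complement_of_minimal_normal_factor_general
    (G : Type*) [Group G]
    (F : Subgroup G)
    (H : Subgroup G) (hcompl : H ⊔ F = ⊤ ∧ H ⊓ F = ⊥)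
    (N : Subgroup G) (hN : IsMinimalNormal N) (hNF : N ≤ F)
    (M : Subgroup G) (hM : M.Normal) (hNM : N ⊓ M = ⊥) (hNMF : N ⊔ M = F) :
    (M ⊔ H) ⊔ N = ⊤ ∧ (M ⊔ H) ⊓ N = ⊥ ∧ M ⊔ H ≠ ⊤ := by
  obtain ⟨hHF_sup, hHF_inf⟩ := hcompl
  have hMF : M ≤ F := hNMF ▸ le_sup_right
  have hMH_inf_F : (M ⊔ H) ⊓ F = M := by
    rw [sup_inf_assoc_of_le_of_normal H hMF, hHF_inf, sup_bot_eq]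
  have hinf : (M ⊔ H) ⊓ N = ⊥ := by
    rw [← inf_eq_right.mpr hNF, ← inf_assoc, hMH_inf_F, inf_comm, hNM]
  refine ⟨?_, hinf, fun htop => hN.2.1 ?_⟩
  · rw [sup_right_comm, sup_comm M N, hNMF, sup_comm, hHF_sup]
  · rwa [htop, top_inf_eq] at hinf

theorem sup_complement_of_minimal_normal_factor
    (G : Type*) [Group G] [Finite G] [Group.IsSolvable G] (hfr : frattini G = ⊥)
    (F : Subgroup G) (hF : IsFitting F)
    (H : Subgroup G) (hcompl : H ⊔ F = ⊤ ∧ H ⊓ F = ⊥)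
    (N : Subgroup G) (hN : IsMinimalNormal N) (hNF : N ≤ F)
    (M : Subgroup G) (hM : M.Normal) (hNM : N ⊓ M = ⊥) (hNMF : N ⊔ M = F) :
    (M ⊔ H) ⊔ N = ⊤ ∧ (M ⊔ H) ⊓ N = ⊥ ∧ M ⊔ H ≠ ⊤ :=
  sup_complement_of_minimal_normal_factor_general G F H hcompl N hN hNF M hM hNM hNMF
end

section
/- Let G = FH be a finite soluble group where F is the Fitting subgroup with complement H and F is a direct product of minimal normal subgroups of G. If H is a K-group, then G is a K-group. -/
open Subgroup
open scoped Classical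

/-! Given `A ≤ G`, the K-property of `H ≅ G ⧸ F` yields `Y ≥ F` with `A ⊔ Y = ⊤` and `A ⊓ Y ≤ F`.
The minimal normal factors `N k` of `F` are then removed from this defect one at a time: `N k` has
the complement `H ⊔ ⨆ j ≠ k, N j`, which contains the factors not yet removed. When none is left,
`A ⊓ Y = ⊥`. -/

open scoped Pointwise

namespace Subgroup

variable {G : Type*} [Group G]

theorem sup_inf_eq_inf_sup_of_normal_le {H L F : Subgroup G} [L.Normal] (hLF : L ≤ F) :
    (H ⊔ L) ⊓ F = (H ⊓ F) ⊔ L := by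
  apply SetLike.coe_injective
  rw [coe_inf, mul_normal, mul_normal, inf_comm H F, inf_mul_assoc F H L hLF, Set.inter_comm]

theorem sup_inf_eq_of_le_of_inf_eq_bot {N R X : Subgroup G} [N.Normal] (hRX : R ≤ X)
    (hNX : N ⊓ X = ⊥) : (N ⊔ R) ⊓ X = R := by
  apply SetLike.coe_injective
  rw [coe_inf, sup_comm, mul_normal, ← mul_inf_assoc R N X hRX, hNX, coe_bot,
    Set.singleton_one, mul_one]

theorem normal_inf_of_sup_eq_top {K N : Subgroup G} [N.Normal] (hN : N ≤ centralizer N)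
    (hKN : K ⊔ N = ⊤) : (K ⊓ N).Normal := by
  rw [← normalizer_eq_top_iff, eq_top_iff, ← hKN]
  refine sup_le ?_ ?_ <;> rw [le_normalizer_iff_commutator_le_left]
  · exact le_inf
      ((commutator_mono inf_le_left le_rfl).trans
        (le_normalizer_iff_commutator_le_left.mp le_normalizer))
      ((commutator_mono inf_le_right le_rfl).trans (commutator_le_left N K))
  · exact (commutator_eq_bot_iff_le_centralizer.mpr (inf_le_right.trans hN)).trans_le bot_le

theorem exists_complement_within_of_le {H A : Subgroup G} [ComplementedLattice (Subgroup H)]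
    (hAH : A ≤ H) : ∃ B ≤ H, A ⊔ B = H ∧ A ⊓ B = ⊥ := by
  obtain ⟨B, hB⟩ := exists_isCompl (A.subgroupOf H)
  refine ⟨B.map H.subtype, map_subtype_le B, ?_, ?_⟩
  · have h := congrArg (map H.subtype) hB.sup_eq_top
    rwa [map_sup, subgroupOf_map_subtype, inf_eq_left.mpr hAH, ← MonoidHom.range_eq_map,
      range_subtype] at h
  · have h := congrArg (map H.subtype) hB.inf_eq_bot
    rwa [map_inf _ _ _ H.subtype_injective, subgroupOf_map_subtype, inf_eq_left.mpr hAH,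
      map_bot] at h

end Subgroup

open Subgroup

theorem isKGroup_iff_complementedLattice {G : Type*} [Group G] :
    IsKGroup G ↔ ComplementedLattice (Subgroup G) :=
  ⟨fun h => ⟨fun A => (h A).imp fun _ hX => .of_eq hX.2 hX.1⟩,
    fun _ A => (exists_isCompl A).imp fun _ hX => ⟨hX.sup_eq_top, hX.inf_eq_bot⟩⟩

theorem IsMinimalNormal.le_centralizer {G : Type*} [Group G] [Group.IsSolvable G]
    {N : Subgroup G} (hN : IsMinimalNormal N) : N ≤ centralizer N := by
  obtain ⟨hNnormal, hN0, hNmin⟩ := hN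
  rw [← commutator_eq_bot_iff_le_centralizer]
  refine (hNmin _ inferInstance (commutator_le_left N N)).resolve_right fun h => ?_
  exact (Group.IsSolvable.commutator_lt_of_ne_bot hN0).ne h

section Complement

variable {G : Type*} [Group G]

/-- Either `Y ⊓ M` still supplements `A`, and then `A ⊓ Y ⊓ M ≤ (N ⊔ R) ⊓ M = R`; or it does not,
and then `A ⊔ (Y ⊓ M)` meets `N` in a normal subgroup (as `N` is abelian) other than `N`, hence
trivially, which already forces `A ⊓ Y ≤ R`. -/
theorem exists_sup_eq_top_inf_le_of_isCompl {A Y N M R : Subgroup G} (hN : IsMinimalNormal N)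
    (hNab : N ≤ centralizer N) (hNM : IsCompl N M) (hRM : R ≤ M) (hNY : N ≤ Y) (hRY : R ≤ Y)
    (hAY : A ⊔ Y = ⊤) (hAYR : A ⊓ Y ≤ N ⊔ R) :
    ∃ Y', R ≤ Y' ∧ A ⊔ Y' = ⊤ ∧ A ⊓ Y' ≤ R := by
  have := hN.1
  set C := M ⊓ Y
  have hY : Y = C ⊔ N := by
    rw [← sup_inf_eq_inf_sup_of_normal_le hNY, sup_comm M N, hNM.sup_eq_top, top_inf_eq]
  have hRC : R ≤ C := le_inf hRM hRY
  by_cases hAC : A ⊔ C = ⊤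
  · refine ⟨C, hRC, hAC, ?_⟩
    rw [← sup_inf_eq_of_le_of_inf_eq_bot hRM hNM.inf_eq_bot]
    exact le_inf ((inf_le_inf_left A inf_le_right).trans hAYR) (inf_le_right.trans inf_le_left)
  · have hACN : A ⊔ C ⊔ N = ⊤ := by rw [sup_assoc, ← hY, hAY]
    have hNAC : N ⊓ (A ⊔ C) = ⊥ := by
      rw [inf_comm]
      refine (hN.2.2 _ (normal_inf_of_sup_eq_top hNab hACN) inf_le_right).resolve_right
        fun h => hAC ?_
      rwa [sup_eq_left.mpr (inf_eq_right.mp h)] at hACN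
    refine ⟨Y, hRY, hAY, ?_⟩
    rw [← sup_inf_eq_of_le_of_inf_eq_bot (hRC.trans le_sup_right) hNAC]
    exact le_inf hAYR (inf_le_left.trans le_sup_left)

theorem exists_isCompl_of_inf_le_iSup {ι : Type*} {N M : ι → Subgroup G}
    (hN : ∀ i, IsMinimalNormal (N i)) (hNab : ∀ i, N i ≤ centralizer (N i))
    (hNM : ∀ i, IsCompl (N i) (M i)) (hNjM : ∀ i j, j ≠ i → N j ≤ M i) {A : Subgroup G}
    (s : Finset ι) {Y : Subgroup G} (hAY : A ⊔ Y = ⊤) (hAYs : A ⊓ Y ≤ ⨆ i ∈ s, N i)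
    (hsY : ⨆ i ∈ s, N i ≤ Y) : ∃ X, IsCompl A X := by
  induction s using Finset.induction_on generalizing Y with
  | empty => exact ⟨Y, .of_eq (by simpa using hAYs) hAY⟩
  | insert k s hk ih =>
    rw [Finset.iSup_insert] at hAYs hsY
    have hsM : ⨆ i ∈ s, N i ≤ M k :=
      iSup₂_le fun j hj => hNjM k j (ne_of_mem_of_not_mem hj hk)
    obtain ⟨Y', hsY', hAY', hAY's⟩ := exists_sup_eq_top_inf_le_of_isCompl (hN k) (hNab k)
      (hNM k) hsM (le_sup_left.trans hsY) (le_sup_right.trans hsY) hAY hAYs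
    exact ih hAY' hAY's hsY'

theorem exists_sup_eq_top_inf_le_of_isCompl_normal {H F : Subgroup G} [F.Normal]
    [ComplementedLattice (Subgroup H)] (hHF : IsCompl H F) (A : Subgroup G) :
    ∃ Y, F ≤ Y ∧ A ⊔ Y = ⊤ ∧ A ⊓ Y ≤ F := by
  obtain ⟨B, hBH, hA₁B, hA₁B'⟩ :=
    exists_complement_within_of_le (inf_le_right : (A ⊔ F) ⊓ H ≤ H)
  refine ⟨B ⊔ F, le_sup_right, ?_, ?_⟩
  · rw [eq_top_iff, ← hHF.sup_eq_top, ← hA₁B]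
    exact sup_le (sup_le (inf_le_left.trans (sup_le_sup_left le_sup_right A))
      (le_sup_left.trans le_sup_right)) (le_sup_right.trans le_sup_right)
  · have hBAF : B ⊓ (A ⊔ F) = ⊥ := by
      rw [← hA₁B', inf_comm, inf_assoc, inf_eq_right.mpr hBH, inf_comm]
    calc A ⊓ (B ⊔ F) ≤ (B ⊔ F) ⊓ (A ⊔ F) := inf_comm A _ ▸ inf_le_inf_left _ le_sup_left
      _ = F := by rw [sup_inf_eq_inf_sup_of_normal_le le_sup_right, hBAF, bot_sup_eq]

theorem isCompl_sup_iSup_ne {ι : Type*} {N : ι → Subgroup G} [∀ i, (N i).Normal]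
    (hind : iSupIndep N) {H : Subgroup G} (hHF : IsCompl H (⨆ i, N i)) (k : ι) :
    IsCompl (N k) (H ⊔ ⨆ j ≠ k, N j) := by
  have hle : ⨆ j ≠ k, N j ≤ ⨆ i, N i := iSup₂_le fun j _ => le_iSup N j
  refine .of_eq ?_ ?_
  · rw [← inf_eq_left.mpr (le_iSup N k), inf_assoc, inf_comm (iSup N),
      sup_inf_eq_inf_sup_of_normal_le hle, hHF.inf_eq_bot, bot_sup_eq]
    exact hind k |>.eq_bot
  · rw [sup_left_comm, ← iSup_split_single, hHF.sup_eq_top]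

end Complement

theorem kGroup_of_complement_kGroup_general
    (G : Type*) [Group G] [Group.IsSolvable G]
    (F : Subgroup G) {t : ℕ} (N : Fin t → Subgroup G)
    (hmin : ∀ i, IsMinimalNormal (N i)) (hind : iSupIndep N) (hsup : ⨆ i, N i = F)
    (H : Subgroup G) (hcompl : H ⊔ F = ⊤ ∧ H ⊓ F = ⊥)
    (hHK : IsKGroup ↥H) :
    IsKGroup G := by
  rw [isKGroup_iff_complementedLattice] at hHK ⊢
  subst hsup
  have hnormal : ∀ i, (N i).Normal := fun i => (hmin i).1
  have hHF : IsCompl H (⨆ i, N i) := .of_eq hcompl.2 hcompl.1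
  have huniv : ⨆ i ∈ Finset.univ, N i = ⨆ i, N i := by simp
  refine ⟨fun A => ?_⟩
  obtain ⟨Y, hFY, hAY, hAYF⟩ := exists_sup_eq_top_inf_le_of_isCompl_normal hHF A
  exact exists_isCompl_of_inf_le_iSup hmin (fun i => (hmin i).le_centralizer)
    (isCompl_sup_iSup_ne hind hHF)
    (fun _ j hj => le_sup_of_le_right (le_iSup₂_of_le j hj le_rfl))
    Finset.univ hAY (huniv ▸ hAYF) (huniv ▸ hFY)

theorem kGroup_of_complement_kGroup
    (G : Type*) [Group G] [Finite G] [Group.IsSolvable G] (hfr : frattini G = ⊥)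
    (F : Subgroup G) (hF : IsFitting F) {t : ℕ} (N : Fin t → Subgroup G)
    (hmin : ∀ i, IsMinimalNormal (N i)) (hind : iSupIndep N) (hsup : ⨆ i, N i = F)
    (H : Subgroup G) (hcompl : H ⊔ F = ⊤ ∧ H ⊓ F = ⊥)
    (hHK : IsKGroup ↥H) :
    IsKGroup G :=
  kGroup_of_complement_kGroup_general G F N hmin hind hsup H hcompl hHK
end
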